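/- arXiv:2408.00148 — 8 statements merged into one kernel-verified Lean document; each statement's English description precedes it below -/
import Mathlib

section
/- For all positive reals a and b, (a - b)(log a - log b) ≥ 4(√a - √b)². -/
/-!
With `x = √a`, `y = √b` the inequality reads `(x - y)((x + y) log (x / y) - 2 (x - y)) ≥ 0`, i.e. the
logarithmic mean of `x` and `y` is at most their arithmetic mean. Putting `s = x / y`, this is the
statement that `g s = (s + 1) log s - 2 (s - 1)` has the sign of `s - 1`; indeed `g 1 = 0` and
`g' s = log s + 1 / s - 1 ≥ 0`.
-/

open Real Set

lemma monotoneOn_add_one_mul_log_sub_two_mul_sub_one :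
    MonotoneOn (fun s : ℝ => (s + 1) * log s - 2 * (s - 1)) (Ioi 0) := by
  have hderiv : ∀ s ∈ Ioi (0 : ℝ), HasDerivAt (fun s : ℝ => (s + 1) * log s - 2 * (s - 1))
      (log s + (s + 1) * s⁻¹ - 2) s := fun s hs => by
    refine ((((hasDerivAt_id' s).add_const 1).mul (hasDerivAt_log (ne_of_gt hs))).sub
      (((hasDerivAt_id' s).sub_const 1).const_mul 2)).congr_deriv ?_
    ring
  refine monotoneOn_of_hasDerivWithinAt_nonneg (convex_Ioi 0)
    (fun s hs => (hderiv s hs).continuousAt.continuousWithinAt)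
    (fun s hs => (hderiv s (interior_subset hs)).hasDerivWithinAt) fun s hs => ?_
  have hs : 0 < s := interior_subset hs
  have hlog := one_sub_inv_le_log_of_pos hs
  have : (s + 1) * s⁻¹ = 1 + s⁻¹ := by field_simp
  linarith

lemma sub_one_mul_add_one_mul_log_sub_two_mul_sub_one_nonneg {s : ℝ} (hs : 0 < s) :
    0 ≤ (s - 1) * ((s + 1) * log s - 2 * (s - 1)) := by
  have hg := monotoneOn_add_one_mul_log_sub_two_mul_sub_one
  have h1 : (1 : ℝ) ∈ Ioi 0 := mem_Ioi.mpr one_pos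
  rcases le_total 1 s with h | h
  · have := hg h1 hs h
    norm_num at this
    exact mul_nonneg (by linarith) (by linarith)
  · have := hg hs h1 h
    norm_num at this
    exact mul_nonneg_of_nonpos_of_nonpos (by linarith) (by linarith)

lemma two_mul_sq_sub_le_sub_mul_add_mul_log_sub_log {x y : ℝ} (hx : 0 < x) (hy : 0 < y) :
    2 * (x - y) ^ 2 ≤ (x - y) * ((x + y) * (log x - log y)) := by
  have h := sub_one_mul_add_one_mul_log_sub_two_mul_sub_one_nonneg (div_pos hx hy)
  rw [log_div hx.ne' hy.ne'] at h
  have key : (x - y) * ((x + y) * (log x - log y)) - 2 * (x - y) ^ 2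
      = y ^ 2 * ((x / y - 1) * ((x / y + 1) * (log x - log y) - 2 * (x / y - 1))) := by
    field_simp
  rw [← sub_nonneg, key]
  exact mul_nonneg (sq_nonneg y) h

theorem stmt0 (a b : ℝ) (ha : 0 < a) (hb : 0 < b) :
    (a - b) * (Real.log a - Real.log b) ≥ 4 * (Real.sqrt a - Real.sqrt b) ^ 2 := by
  obtain ⟨x, hx, rfl⟩ : ∃ x, 0 < x ∧ x ^ 2 = a := ⟨√a, sqrt_pos.mpr ha, sq_sqrt ha.le⟩
  obtain ⟨y, hy, rfl⟩ : ∃ y, 0 < y ∧ y ^ 2 = b := ⟨√b, sqrt_pos.mpr hb, sq_sqrt hb.le⟩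
  rw [sqrt_sq hx.le, sqrt_sq hy.le, log_pow, log_pow]
  calc 4 * (x - y) ^ 2 ≤ 2 * ((x - y) * ((x + y) * (log x - log y))) := by
        linarith [two_mul_sq_sub_le_sub_mul_add_mul_log_sub_log hx hy]
    _ = (x ^ 2 - y ^ 2) * (2 * log x - 2 * log y) := by ring
    _ = _ := by push_cast; ring
end

section
/- Let q = (q_0, ..., q_{2k}) be a probability vector on {0,1,...,2k} with mean μ = Σ n·q_n. Then (1/2)·Σ_{i,j} |i-j| q_i q_j ≥ Σ_{i=0}^{⌊μ⌋} (μ - i) q_i. -/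
/-!
Write `D = ∑ᵢ ∑ⱼ |i - j| qᵢ qⱼ`. Since `μ - i = ∑ⱼ (j - i) qⱼ`, the triangle inequality gives
`|μ - i| ≤ ∑ⱼ |i - j| qⱼ`, hence `D ≥ ∑ᵢ qᵢ |μ - i|`. The deviations `μ - i` have mean zero, so
the positive and negative parts contribute equally to the mean absolute deviation:
`∑ᵢ qᵢ |μ - i| = 2 ∑_{i ≤ μ} (μ - i) qᵢ`, and the indices `i ≤ μ` are exactly `i ≤ ⌊μ⌋`.
-/

open Finset

namespace Finset

variable {ι : Type*} (s : Finset ι) {w : ι → ℝ} (x : ι → ℝ)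

theorem abs_sum_mul_sub_le (hw : ∀ i ∈ s, 0 ≤ w i) (hw1 : ∑ i ∈ s, w i = 1) (y : ℝ) :
    |∑ j ∈ s, x j * w j - y| ≤ ∑ j ∈ s, |y - x j| * w j := by
  have hdev : ∑ j ∈ s, x j * w j - y = ∑ j ∈ s, (x j - y) * w j := by
    rw [eq_comm]
    simp only [sub_mul, sum_sub_distrib, ← mul_sum, hw1, mul_one]
  rw [hdev]
  refine (abs_sum_le_sum_abs _ _).trans_eq (sum_congr rfl fun j hj => ?_)
  rw [abs_mul, abs_of_nonneg (hw j hj), abs_sub_comm]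

theorem sum_mul_abs_sub_le_sum_sum (hw : ∀ i ∈ s, 0 ≤ w i) (hw1 : ∑ i ∈ s, w i = 1) :
    ∑ i ∈ s, w i * |∑ j ∈ s, x j * w j - x i|
      ≤ ∑ i ∈ s, ∑ j ∈ s, |x i - x j| * w i * w j := by
  refine sum_le_sum fun i hi => ?_
  calc w i * |∑ j ∈ s, x j * w j - x i|
      ≤ w i * ∑ j ∈ s, |x i - x j| * w j :=
        mul_le_mul_of_nonneg_left (abs_sum_mul_sub_le s x hw hw1 (x i)) (hw i hi)
    _ = ∑ j ∈ s, |x i - x j| * w i * w j := by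
        rw [mul_sum]
        exact sum_congr rfl fun j _ => by ring

theorem sum_mul_abs_sub_eq_two_mul_sum_filter (hw1 : ∑ i ∈ s, w i = 1) {m : ℝ}
    (hm : m = ∑ i ∈ s, x i * w i) :
    ∑ i ∈ s, w i * |m - x i| = 2 * ∑ i ∈ s with x i ≤ m, (m - x i) * w i := by
  have hzero : ∑ i ∈ s, w i * (m - x i) = 0 := by
    calc ∑ i ∈ s, w i * (m - x i) = (∑ i ∈ s, w i) * m - ∑ i ∈ s, x i * w i := by
          rw [sum_mul, ← sum_sub_distrib]
          exact sum_congr rfl fun i _ => by ring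
      _ = 0 := by rw [hw1, ← hm, one_mul, sub_self]
  have hpos : ∑ i ∈ s with x i ≤ m, (m - x i) * w i = ∑ i ∈ s, w i * max (m - x i) 0 := by
    rw [sum_filter]
    refine sum_congr rfl fun i _ => ?_
    split_ifs with h
    · rw [max_eq_left (sub_nonneg.mpr h), mul_comm]
    · rw [max_eq_right (by linarith [not_le.mp h]), mul_zero]
  have habs (t : ℝ) : |t| = 2 * max t 0 - t := by
    rcases le_total 0 t with ht | ht
    · rw [abs_of_nonneg ht, max_eq_left ht]; ring
    · rw [abs_of_nonpos ht, max_eq_right ht]; ring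
  calc ∑ i ∈ s, w i * |m - x i|
      = ∑ i ∈ s, 2 * (w i * max (m - x i) 0) - ∑ i ∈ s, w i * (m - x i) := by
        rw [← sum_sub_distrib]
        exact sum_congr rfl fun i _ => by rw [habs]; ring
    _ = 2 * ∑ i ∈ s with x i ≤ m, (m - x i) * w i := by rw [hzero, sub_zero, hpos, mul_sum]

end Finset

theorem range_floor_add_one_eq_filter {m : ℝ} (hm : 0 ≤ m) {N : ℕ} (hmN : m < N) :
    range (⌊m⌋₊ + 1) = (range N).filter fun i : ℕ => (i : ℝ) ≤ m := by
  ext i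
  simp only [mem_range, mem_filter, Nat.lt_succ_iff, Nat.le_floor_iff hm]
  exact ⟨fun hi => ⟨by exact_mod_cast hi.trans_lt hmN, hi⟩, And.right⟩

theorem stmt1_general (k : ℕ) (q : ℕ → ℝ)
    (hq : ∀ n, 0 ≤ q n) (hsum : ∑ n ∈ Finset.range (2*k+1), q n = 1)
    (μ : ℝ) (hμ : μ = ∑ n ∈ Finset.range (2*k+1), (n : ℝ) * q n) :
    (1/2) * ∑ i ∈ Finset.range (2*k+1), ∑ j ∈ Finset.range (2*k+1),
        |(i : ℝ) - (j : ℝ)| * q i * q j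
      ≥ ∑ i ∈ Finset.range (Nat.floor μ + 1), (μ - (i : ℝ)) * q i := by
  have hμ0 : 0 ≤ μ := hμ ▸ sum_nonneg fun n _ => mul_nonneg n.cast_nonneg (hq n)
  have hμlt : μ < ((2 * k + 1 : ℕ) : ℝ) := by
    calc μ ≤ ∑ n ∈ range (2 * k + 1), ((2 * k : ℕ) : ℝ) * q n :=
          hμ ▸ sum_le_sum fun n hn => mul_le_mul_of_nonneg_right
            (by exact_mod_cast Nat.lt_succ_iff.mp (mem_range.mp hn)) (hq n)
      _ < ((2 * k + 1 : ℕ) : ℝ) := by rw [← mul_sum, hsum]; push_cast; linarith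
  have hgini := sum_mul_abs_sub_le_sum_sum (range (2 * k + 1)) (fun n : ℕ => (n : ℝ))
    (fun n _ => hq n) hsum
  rw [← hμ, sum_mul_abs_sub_eq_two_mul_sum_filter _ _ hsum hμ] at hgini
  rw [range_floor_add_one_eq_filter hμ0 hμlt]
  linarith

theorem stmt1 (k : ℕ) (hk : 0 < k) (q : ℕ → ℝ)
    (hq : ∀ n, 0 ≤ q n) (hsum : ∑ n ∈ Finset.range (2*k+1), q n = 1)
    (μ : ℝ) (hμ : μ = ∑ n ∈ Finset.range (2*k+1), (n : ℝ) * q n) :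
    (1/2) * ∑ i ∈ Finset.range (2*k+1), ∑ j ∈ Finset.range (2*k+1),
        |(i : ℝ) - (j : ℝ)| * q i * q j
      ≥ ∑ i ∈ Finset.range (Nat.floor μ + 1), (μ - (i : ℝ)) * q i :=
  stmt1_general k q hq hsum μ hμ
end

section
/- Among all probability vectors q on {0,1,...,2k} with mean μ ∈ (0,2k), the rescaled Gini index G̃[q] = (1/2)Σ_{i,j}|i-j| q_i q_j is uniquely minimized by q* given by q*_{⌊μ⌋} = 1 - μ + ⌊μ⌋, q*_{⌊μ⌋+1} = μ - ⌊μ⌋ and q*_n = 0 otherwise. That is, if q has mean μ and q_m > 0 for some m ∉ {⌊μ⌋, ⌊μ⌋+1}, then G̃[q] > (1 - μ + ⌊μ⌋)(μ - ⌊μ⌋). -/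
/-!
With the tail masses `c t = ∑_{t < i ≤ 2k} q i` one has `μ = ∑_{t < 2k} c t`, and since `|i - j|`
counts the `t` lying weakly above one of `i, j` and strictly below the other,
`G̃[q] = ∑_{t < 2k} c t (1 - c t)`. The sequence `c` is nonincreasing with values in `[0, 1]`, so
comparing every term with `x = c ⌊μ⌋` bounds the sum below by `x D + x (1 - x) + (1 - x) B`, where
`D = ∑_{t < ⌊μ⌋} (1 - c t)` and `B = ∑_{⌊μ⌋ < t < 2k} c t`. Since `f = μ - ⌊μ⌋ = x + B - D`, this
bound equals `f (1 - f) + (1 - f) D + f B`, and mass at some `m ∉ {⌊μ⌋, ⌊μ⌋ + 1}` makes `D` or `B`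
positive.
-/

open Finset

def tailMass (N : ℕ) (q : ℕ → ℝ) (t : ℕ) : ℝ := ∑ i ∈ Ioc t N, q i

section tailMass

variable {N : ℕ} {q : ℕ → ℝ}

lemma tailMass_nonneg (hq : ∀ n, 0 ≤ q n) (t : ℕ) : 0 ≤ tailMass N q t :=
  sum_nonneg fun i _ => hq i

lemma tailMass_antitone (hq : ∀ n, 0 ≤ q n) : Antitone (tailMass N q) := fun _ _ hts =>
  sum_le_sum_of_subset_of_nonneg (Ioc_subset_Ioc_left hts) fun i _ _ => hq i

lemma sum_range_add_tailMass {t : ℕ} (ht : t ≤ N) :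
    ∑ i ∈ range (t + 1), q i + tailMass N q t = ∑ i ∈ range (N + 1), q i := by
  have : Ioc t N = Ico (t + 1) (N + 1) := by ext; simp
  rw [tailMass, this, sum_range_add_sum_Ico _ (by omega)]

lemma tailMass_le_one (hq : ∀ n, 0 ≤ q n) (hsum : ∑ n ∈ range (N + 1), q n = 1) (t : ℕ) :
    tailMass N q t ≤ 1 :=
  hsum ▸ sum_le_sum_of_subset_of_nonneg (fun i => by simp) fun i _ _ => hq i

lemma tailMass_lt_one (hq : ∀ n, 0 ≤ q n) (hsum : ∑ n ∈ range (N + 1), q n = 1) {t : ℕ}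
    (ht : t ≤ N) (hqt : 0 < q t) : tailMass N q t < 1 := by
  have hhead : q t ≤ ∑ i ∈ range (t + 1), q i :=
    single_le_sum (fun i _ => hq i) (self_mem_range_succ t)
  linarith [sum_range_add_tailMass (q := q) ht]

lemma tailMass_pos (hq : ∀ n, 0 ≤ q n) {t m : ℕ} (htm : t < m) (hm : m ≤ N) (hqm : 0 < q m) :
    0 < tailMass N q t :=
  hqm.trans_le <| single_le_sum (fun i _ => hq i) (mem_Ioc.2 ⟨htm, hm⟩)

lemma sum_range_tailMass :
    ∑ t ∈ range N, tailMass N q t = ∑ i ∈ range (N + 1), (i : ℝ) * q i := by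
  simp_rw [tailMass]
  rw [sum_comm' (t' := range (N + 1)) (s' := fun i => range i) (by intro t i; simp; omega)]
  simp

lemma sum_range_mul_tailMass :
    ∑ t ∈ range N, (∑ i ∈ range (t + 1), q i) * tailMass N q t
      = ∑ i ∈ range (N + 1), ∑ j ∈ range (N + 1), ((j - i : ℕ) : ℝ) * q i * q j := by
  have hexpand : ∀ t ∈ range N, (∑ i ∈ range (t + 1), q i) * tailMass N q t
      = ∑ i ∈ range (N + 1), ∑ j ∈ range (N + 1), if i ≤ t ∧ t < j then q i * q j else 0 := by
    intro t ht
    have hhead : range (t + 1) = {i ∈ range (N + 1) | i ≤ t} := by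
      ext; simp at ht ⊢; omega
    have htail : Ioc t N = {j ∈ range (N + 1) | t < j} := by ext; simp; omega
    rw [tailMass, hhead, htail, sum_filter, sum_filter, sum_mul_sum]
    simp_rw [ite_zero_mul_ite_zero]
  have hcount : ∀ i ∈ range (N + 1), ∀ j ∈ range (N + 1),
      ∑ t ∈ range N, (if i ≤ t ∧ t < j then q i * q j else 0)
        = ((j - i : ℕ) : ℝ) * q i * q j := by
    intro i _ j hj
    have : {t ∈ range N | i ≤ t ∧ t < j} = Ico i j := by ext; simp at hj ⊢; omega
    rw [← sum_filter, this, sum_const, Nat.card_Ico, nsmul_eq_mul, mul_assoc]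
  rw [sum_congr rfl hexpand, sum_comm]
  refine sum_congr rfl fun i hi => ?_
  rw [sum_comm]
  exact sum_congr rfl (hcount i hi)

lemma abs_natCast_sub_natCast (i j : ℕ) :
    |(i : ℝ) - j| = ((j - i : ℕ) : ℝ) + ((i - j : ℕ) : ℝ) := by
  rcases le_total i j with h | h
  · rw [abs_sub_comm, abs_of_nonneg (by simpa using h), Nat.sub_eq_zero_of_le h, Nat.cast_sub h]
    simp
  · rw [abs_of_nonneg (by simpa using h), Nat.sub_eq_zero_of_le h, Nat.cast_sub h]
    simp

lemma sum_abs_sub_mul_mul_eq :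
    ∑ i ∈ range (N + 1), ∑ j ∈ range (N + 1), |(i : ℝ) - j| * q i * q j
      = 2 * ∑ t ∈ range N, (∑ i ∈ range (t + 1), q i) * tailMass N q t := by
  rw [sum_range_mul_tailMass, two_mul]
  nth_rewrite 2 [sum_comm]
  rw [← sum_add_distrib]
  refine sum_congr rfl fun i _ => ?_
  rw [← sum_add_distrib]
  refine sum_congr rfl fun j _ => ?_
  rw [abs_natCast_sub_natCast]
  ring

end tailMass

lemma sum_range_eq_add_add {M : Type*} [AddCommMonoid M] (g : ℕ → M) {F N : ℕ} (hF : F < N) :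
    ∑ t ∈ range N, g t = ∑ t ∈ range F, g t + g F + ∑ t ∈ Ico (F + 1) N, g t := by
  rw [← sum_range_succ, sum_range_add_sum_Ico _ hF]

section Antitone

variable {c : ℕ → ℝ} {N : ℕ}

lemma mul_add_mul_le_sum_mul_one_sub (hc : Antitone c) (h0 : ∀ t, 0 ≤ c t)
    (h1 : ∀ t, c t ≤ 1) {F : ℕ} (hF : F < N) :
    c F * ∑ t ∈ range F, (1 - c t) + c F * (1 - c F) + (1 - c F) * ∑ t ∈ Ico (F + 1) N, c t
      ≤ ∑ t ∈ range N, c t * (1 - c t) := by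
  rw [sum_range_eq_add_add _ hF, mul_sum, mul_sum]
  refine add_le_add (add_le_add (sum_le_sum fun t ht => ?_) le_rfl) (sum_le_sum fun t ht => ?_)
  · exact mul_le_mul_of_nonneg_right (hc (mem_range.1 ht).le) (sub_nonneg.2 (h1 t))
  · rw [mul_comm]
    exact mul_le_mul_of_nonneg_left
      (sub_le_sub_left (hc (Nat.le_of_succ_le (mem_Ico.1 ht).1)) 1) (h0 t)

lemma floor_mul_lt_sum_mul_one_sub (hc : Antitone c) (h0 : ∀ t, 0 ≤ c t) (h1 : ∀ t, c t ≤ 1)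
    {μ : ℝ} (hμ : ∑ t ∈ range N, c t = μ) (hμN : μ < N)
    (hspread : (∃ t < ⌊μ⌋₊, c t < 1) ∨ ∃ t ∈ Ico (⌊μ⌋₊ + 1) N, 0 < c t) :
    (1 - μ + ⌊μ⌋₊) * (μ - ⌊μ⌋₊) < ∑ t ∈ range N, c t * (1 - c t) := by
  set F := ⌊μ⌋₊
  have hμ0 : 0 ≤ μ := hμ ▸ sum_nonneg fun t _ => h0 t
  have hFμ : (F : ℝ) ≤ μ := Nat.floor_le hμ0
  have hμF : μ < F + 1 := Nat.lt_floor_add_one μ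
  have hFN : F < N := (Nat.floor_lt hμ0).2 hμN
  set D := ∑ t ∈ range F, (1 - c t)
  set B := ∑ t ∈ Ico (F + 1) N, c t
  have hfract : μ - F = c F + B - D := by
    rw [← hμ, sum_range_eq_add_add _ hFN]
    simp only [D, B, sum_sub_distrib, sum_const, card_range, nsmul_eq_mul, mul_one]
    ring
  have hD0 : 0 ≤ D := sum_nonneg fun t _ => sub_nonneg.2 (h1 t)
  have hB0 : 0 ≤ B := sum_nonneg fun t _ => h0 t
  have hDB : 0 < D ∨ 0 < B := by
    refine hspread.imp (fun ⟨t, ht, hct⟩ => ?_) (fun ⟨t, ht, hct⟩ => ?_)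
    · exact sum_pos' (fun t _ => sub_nonneg.2 (h1 t)) ⟨t, mem_range.2 ht, sub_pos.2 hct⟩
    · exact sum_pos' (fun t _ => h0 t) ⟨t, ht, hct⟩
  have hexcess : 0 < (1 - (μ - F)) * D + (μ - F) * B := by
    rcases hD0.lt_or_eq with hDpos | hDzero
    · nlinarith [mul_pos (sub_pos.2 (by linarith : μ - F < 1)) hDpos,
        mul_nonneg (sub_nonneg.2 hFμ) hB0]
    · have hBpos : 0 < B := hDB.resolve_left hDzero.not_lt
      rw [← hDzero, mul_zero, zero_add]
      exact mul_pos (by linarith [h0 F]) hBpos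
  have hlow := mul_add_mul_le_sum_mul_one_sub hc h0 h1 hFN
  have hbound : c F * D + c F * (1 - c F) + (1 - c F) * B
      = (1 - (μ - F)) * (μ - F) + ((1 - (μ - F)) * D + (μ - F) * B) := by
    rw [hfract]; ring
  linarith

end Antitone

theorem stmt3_general (k : ℕ) (q : ℕ → ℝ)
    (hq : ∀ n, 0 ≤ q n) (hsum : ∑ n ∈ Finset.range (2*k+1), q n = 1)
    (μ : ℝ) (hμ : μ = ∑ n ∈ Finset.range (2*k+1), (n : ℝ) * q n)
    (hμ2k : μ < 2*k)
    (m : ℕ) (hm : m ≤ 2*k) (hqm : 0 < q m)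
    (hm1 : m ≠ Nat.floor μ) (hm2 : m ≠ Nat.floor μ + 1) :
    (1/2) * ∑ i ∈ Finset.range (2*k+1), ∑ j ∈ Finset.range (2*k+1),
        |(i : ℝ) - (j : ℝ)| * q i * q j
      > (1 - μ + (Nat.floor μ : ℝ)) * (μ - (Nat.floor μ : ℝ)) := by
  set c := tailMass (2 * k) q
  have hhead : ∀ t ∈ range (2 * k), ∑ i ∈ range (t + 1), q i = 1 - c t :=
    fun t ht => by linarith [sum_range_add_tailMass (q := q) (mem_range.1 ht).le]
  have hgini : (1 / 2) * ∑ i ∈ range (2 * k + 1), ∑ j ∈ range (2 * k + 1),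
      |(i : ℝ) - j| * q i * q j = ∑ t ∈ range (2 * k), c t * (1 - c t) := by
    rw [sum_abs_sub_mul_mul_eq, sum_congr rfl fun t ht => by rw [hhead t ht, mul_comm]]
    ring
  have hspread : (∃ t < ⌊μ⌋₊, c t < 1) ∨ ∃ t ∈ Ico (⌊μ⌋₊ + 1) (2 * k), 0 < c t := by
    rcases lt_or_gt_of_ne hm1 with hlt | hgt
    · exact Or.inl ⟨m, hlt, tailMass_lt_one hq hsum hm hqm⟩
    · exact Or.inr ⟨m - 1, mem_Ico.2 ⟨by omega, by omega⟩, tailMass_pos hq (by omega) hm hqm⟩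
  rw [gt_iff_lt, hgini]
  exact floor_mul_lt_sum_mul_one_sub (tailMass_antitone hq) (tailMass_nonneg hq)
    (tailMass_le_one hq hsum) (sum_range_tailMass.trans hμ.symm) (by exact_mod_cast hμ2k) hspread

theorem stmt3 (k : ℕ) (hk : 0 < k) (q : ℕ → ℝ)
    (hq : ∀ n, 0 ≤ q n) (hsum : ∑ n ∈ Finset.range (2*k+1), q n = 1)
    (μ : ℝ) (hμ : μ = ∑ n ∈ Finset.range (2*k+1), (n : ℝ) * q n)
    (hμ0 : 0 < μ) (hμ2k : μ < 2*k)
    (m : ℕ) (hm : m ≤ 2*k) (hqm : 0 < q m)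
    (hm1 : m ≠ Nat.floor μ) (hm2 : m ≠ Nat.floor μ + 1) :
    (1/2) * ∑ i ∈ Finset.range (2*k+1), ∑ j ∈ Finset.range (2*k+1),
        |(i : ℝ) - (j : ℝ)| * q i * q j
      > (1 - μ + (Nat.floor μ : ℝ)) * (μ - (Nat.floor μ : ℝ)) :=
  stmt3_general k q hq hsum μ hμ hμ2k m hm hqm hm1 hm2
end

section
/- Let q(t) be a C¹ solution of the ODE system q_n' = q_{n-1} Σ_{j=n}^{2k} q_j + q_{n+1} Σ_{j=0}^{n} q_j - q_n(1 - q_n) for 0 ≤ n ≤ 2k (with the convention q_{-1} = q_{2k+1} = 0), taking values in the probability simplex. Then d/dt [(1/2) Σ_{i,j=0}^{2k} |i-j| q_i q_j] = -2 Σ_{0 ≤ i < j < ℓ ≤ 2k} q_i q_j q_ℓ ≤ 0. -/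
/-! With `F n = q_0 + ⋯ + q_n`, the right-hand side of the equation for `q_n` is the discrete
divergence `J n - J (n - 1)` of the flux `J n = q_{n+1} F n - q_n (1 - F n)`, so `(F n)' = J n`.
Since `|i - j|` counts the levels `m` at which exactly one of `i, j` is `≤ m`, the functional is
`∑ m, F m (1 - F m)`, with derivative `∑ m, J m (1 - 2 F m)`. Adding twice the triple sum
`∑ n, F (n - 1) q_n (1 - F n)` turns this into the telescoping sum of
`Φ n = q_{n+1} F n (1 - 2 F n) + 3 (F n)² - 2 (F n)³ - F n`, which vanishes at both ends. -/

open Finset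

theorem Int.sum_Icc_split {M : Type*} [AddCommMonoid M] (f : ℤ → M) {a b c : ℤ}
    (hab : a ≤ b + 1) (hbc : b ≤ c) :
    ∑ n ∈ Icc a c, f n = ∑ n ∈ Icc a b, f n + ∑ n ∈ Icc (b + 1) c, f n := by
  rw [← sum_union (disjoint_left.2 fun x hx hx' => by simp only [mem_Icc] at hx hx'; omega)]
  congr 1
  ext x
  simp only [mem_union, mem_Icc]
  omega

theorem Int.sum_Icc_sub_sub_one {M : Type*} [AddCommGroup M] (g : ℤ → M) {a N : ℤ}
    (h : a - 1 ≤ N) : ∑ n ∈ Icc a N, (g n - g (n - 1)) = g N - g (a - 1) := by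
  induction N, h using Int.leInduction with
  | base => simp
  | succ n hn ih =>
    rw [Int.sum_Icc_split _ (by omega) (by omega : n ≤ n + 1), ih, Icc_self, sum_singleton,
      add_sub_cancel_right]
    abel

theorem abs_sub_eq_sum_sq_indicator {N i j : ℤ} (hi : i ∈ Icc 0 N) (hj : j ∈ Icc 0 N) :
    |(i : ℝ) - j| = ∑ m ∈ Icc 0 N,
      ((if i ≤ m then 1 else 0) - (if j ≤ m then 1 else 0) : ℝ) ^ 2 := by
  wlog hji : j ≤ i generalizing i j
  · rw [abs_sub_comm, this hj hi (by omega)]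
    exact sum_congr rfl fun m _ => by ring
  have hterm : ∀ m ∈ Icc 0 N,
      ((if i ≤ m then 1 else 0) - (if j ≤ m then 1 else 0) : ℝ) ^ 2
        = if m ∈ Ico j i then 1 else 0 := by
    intro m _
    simp only [mem_Ico]
    split_ifs <;> norm_num <;> omega
  simp only [mem_Icc] at hi hj
  rw [sum_congr rfl hterm, sum_ite_mem, inter_eq_right.2 (fun m hm => by
    simp only [mem_Ico] at hm; simp only [mem_Icc]; omega), sum_const, Int.card_Ico,
    nsmul_one, abs_of_nonneg (by exact_mod_cast sub_nonneg.2 hji)]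
  exact_mod_cast (Int.toNat_of_nonneg (sub_nonneg.2 hji)).symm

theorem sum_sum_sq_indicator_sub_mul_mul {N m : ℤ} (hm : m ∈ Icc 0 N) (p : ℤ → ℝ) :
    ∑ i ∈ Icc 0 N, ∑ j ∈ Icc 0 N,
        ((if i ≤ m then 1 else 0) - (if j ≤ m then 1 else 0) : ℝ) ^ 2 * p i * p j
      = 2 * ((∑ i ∈ Icc 0 m, p i) * ∑ j ∈ Icc (m + 1) N, p j) := by
  simp only [mem_Icc] at hm
  set e : ℤ → ℝ := fun i => if i ≤ m then p i else 0
  have hterm : ∀ i j, ((if i ≤ m then 1 else 0) - (if j ≤ m then 1 else 0) : ℝ) ^ 2 * p i * p j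
      = e i * (p j - e j) + (p i - e i) * e j := by
    intro i j
    simp only [e]
    split_ifs <;> ring
  have hlow : ∑ i ∈ Icc 0 N, e i = ∑ i ∈ Icc 0 m, p i := by
    rw [← sum_filter]
    congr 1
    ext i
    simp only [mem_filter, mem_Icc]
    omega
  have hhigh : ∑ i ∈ Icc 0 N, (p i - e i) = ∑ j ∈ Icc (m + 1) N, p j := by
    rw [sum_sub_distrib, hlow, Int.sum_Icc_split p (b := m) (by omega) hm.2]
    ring
  simp only [hterm, sum_add_distrib, ← sum_mul_sum, hlow, hhigh]
  ring

theorem half_sum_abs_sub_mul_mul (N : ℤ) (p : ℤ → ℝ) :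
    (1 / 2) * ∑ i ∈ Icc 0 N, ∑ j ∈ Icc 0 N, |(i : ℝ) - j| * p i * p j
      = ∑ m ∈ Icc 0 N, (∑ i ∈ Icc 0 m, p i) * ∑ j ∈ Icc (m + 1) N, p j := by
  have hexpand : ∀ i ∈ Icc 0 N, ∀ j ∈ Icc 0 N, |(i : ℝ) - j| * p i * p j
      = ∑ m ∈ Icc 0 N,
          ((if i ≤ m then 1 else 0) - (if j ≤ m then 1 else 0) : ℝ) ^ 2 * p i * p j := by
    intro i hi j hj
    rw [abs_sub_eq_sum_sq_indicator hi hj, sum_mul, sum_mul]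
  rw [sum_congr rfl fun i hi => sum_congr rfl (hexpand i hi),
    sum_congr rfl fun i _ => sum_comm, sum_comm,
    sum_congr rfl fun m hm => sum_sum_sq_indicator_sub_mul_mul hm p, ← mul_sum]
  ring

noncomputable def cdf (p : ℤ → ℝ) (n : ℤ) : ℝ := ∑ m ∈ Icc 0 n, p m

noncomputable def flux (p : ℤ → ℝ) (n : ℤ) : ℝ := p (n + 1) * cdf p n - p n * (1 - cdf p n)

theorem cdf_of_neg (p : ℤ → ℝ) {n : ℤ} (hn : n < 0) : cdf p n = 0 := by
  rw [cdf, Icc_eq_empty (by omega), sum_empty]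

theorem cdf_eq_cdf_sub_one_add (p : ℤ → ℝ) {n : ℤ} (hn : 0 ≤ n) :
    cdf p n = cdf p (n - 1) + p n := by
  rw [cdf, cdf, Int.sum_Icc_split p (b := n - 1) (by omega) (by omega), sub_add_cancel, Icc_self,
    sum_singleton]

section Simplex

variable {p : ℤ → ℝ} {N : ℤ} (h1 : ∑ n ∈ Icc 0 N, p n = 1)
include h1

theorem sum_Icc_eq_one_sub_cdf {n : ℤ} (h0 : 0 ≤ n) (hN : n ≤ N + 1) :
    ∑ j ∈ Icc n N, p j = 1 - cdf p (n - 1) := by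
  rw [← h1, Int.sum_Icc_split p (a := 0) (b := n - 1) (by omega) (by omega), sub_add_cancel, cdf]
  ring

theorem ode_rhs_eq_flux_sub_flux {n : ℤ} (hn : n ∈ Icc 0 N) :
    p (n - 1) * (∑ j ∈ Icc n N, p j) + p (n + 1) * (∑ j ∈ Icc 0 n, p j) - p n * (1 - p n)
      = flux p n - flux p (n - 1) := by
  simp only [mem_Icc] at hn
  rw [sum_Icc_eq_one_sub_cdf h1 hn.1 (by omega), ← cdf, flux, flux, sub_add_cancel,
    cdf_eq_cdf_sub_one_add p hn.1]
  ring

theorem sum_triple_eq_sum_cdf_mul :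
    ∑ l ∈ Icc 0 N, ∑ j ∈ Icc 0 (l - 1), ∑ i ∈ Icc 0 (j - 1), p i * p j * p l
      = ∑ j ∈ Icc 0 N, cdf p (j - 1) * p j * (1 - cdf p j) := by
  calc _ = ∑ l ∈ Icc 0 N, ∑ j ∈ Icc 0 (l - 1), cdf p (j - 1) * p j * p l := by
        simp only [cdf, sum_mul]
    _ = ∑ j ∈ Icc 0 N, ∑ l ∈ Icc (j + 1) N, cdf p (j - 1) * p j * p l :=
        sum_comm' fun l j => by simp only [mem_Icc]; omega
    _ = _ := sum_congr rfl fun j hj => by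
        simp only [mem_Icc] at hj
        rw [← mul_sum, sum_Icc_eq_one_sub_cdf h1 (by omega) (by omega), add_sub_cancel_right]

theorem sum_flux_mul_eq (hN : 0 ≤ N) (htop : p (N + 1) = 0) :
    ∑ n ∈ Icc 0 N, flux p n * (1 - 2 * cdf p n)
      = -2 * ∑ n ∈ Icc 0 N, cdf p (n - 1) * p n * (1 - cdf p n) := by
  set Φ : ℤ → ℝ := fun n =>
    p (n + 1) * cdf p n * (1 - 2 * cdf p n) + 3 * cdf p n ^ 2 - 2 * cdf p n ^ 3 - cdf p n
  have hstep : ∀ n ∈ Icc 0 N,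
      flux p n * (1 - 2 * cdf p n) + 2 * (cdf p (n - 1) * p n * (1 - cdf p n))
        = Φ n - Φ (n - 1) := by
    intro n hn
    simp only [mem_Icc] at hn
    simp only [Φ, flux, sub_add_cancel, cdf_eq_cdf_sub_one_add p hn.1]
    ring
  have htele := Int.sum_Icc_sub_sub_one Φ (a := 0) (N := N) (by omega)
  rw [← sum_congr rfl hstep, sum_add_distrib, ← mul_sum] at htele
  have hcdfN : cdf p N = 1 := h1
  simp only [Φ, htop, hcdfN, cdf_of_neg p (by omega : (0 : ℤ) - 1 < 0)] at htele
  linarith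

end Simplex

theorem hasDerivAt_cdf {q : ℝ → ℤ → ℝ} {N m : ℤ} {t : ℝ} (hm : m ∈ Icc 0 N)
    (h1 : ∑ n ∈ Icc 0 N, q t n = 1) (hneg : q t (-1) = 0)
    (hode : ∀ n ∈ Icc 0 N, HasDerivAt (fun s => q s n)
      (q t (n - 1) * (∑ j ∈ Icc n N, q t j) + q t (n + 1) * (∑ j ∈ Icc 0 n, q t j)
        - q t n * (1 - q t n)) t) :
    HasDerivAt (fun s => cdf (q s) m) (flux (q t) m) t := by
  simp only [mem_Icc] at hm
  have hsub : ∀ n ∈ Icc 0 m, n ∈ Icc 0 N := fun n hn => by simp only [mem_Icc] at hn ⊢; omega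
  have hsum := HasDerivAt.fun_sum fun n hn => hode n (hsub n hn)
  have hflux : flux (q t) (-1) = 0 := by
    rw [flux, hneg, cdf_of_neg _ (by omega : (-1 : ℤ) < 0)]
    ring
  rwa [sum_congr rfl fun n hn => ode_rhs_eq_flux_sub_flux h1 (hsub n hn),
    Int.sum_Icc_sub_sub_one _ (by omega), zero_sub, hflux, sub_zero] at hsum

theorem stmt6_general (k : ℕ) (q : ℝ → ℤ → ℝ)
    (hout : ∀ t n, (n < 0 ∨ (2*k : ℤ) < n) → q t n = 0)
    (hpos : ∀ t n, 0 ≤ q t n)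
    (hsum : ∀ t, ∑ n ∈ Finset.Icc (0:ℤ) (2*k), q t n = 1)
    (hode : ∀ t, ∀ n ∈ Finset.Icc (0:ℤ) (2*k),
      HasDerivAt (fun s => q s n)
        (q t (n-1) * (∑ j ∈ Finset.Icc n (2*k : ℤ), q t j)
          + q t (n+1) * (∑ j ∈ Finset.Icc (0:ℤ) n, q t j)
          - q t n * (1 - q t n)) t) :
    ∀ t : ℝ,
      HasDerivAt (fun s => (1/2) * ∑ i ∈ Finset.Icc (0:ℤ) (2*k),
          ∑ j ∈ Finset.Icc (0:ℤ) (2*k), |(i : ℝ) - (j : ℝ)| * q s i * q s j)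
        (-2 * ∑ l ∈ Finset.Icc (0:ℤ) (2*k), ∑ j ∈ Finset.Icc (0:ℤ) (l-1),
          ∑ i ∈ Finset.Icc (0:ℤ) (j-1), q t i * q t j * q t l) t
      ∧ -2 * ∑ l ∈ Finset.Icc (0:ℤ) (2*k), ∑ j ∈ Finset.Icc (0:ℤ) (l-1),
          ∑ i ∈ Finset.Icc (0:ℤ) (j-1), q t i * q t j * q t l ≤ 0 := by
  intro t
  have hN : (0 : ℤ) ≤ 2 * k := by positivity
  have hV : (fun s => (1/2) * ∑ i ∈ Icc (0:ℤ) (2*k), ∑ j ∈ Icc (0:ℤ) (2*k),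
      |(i : ℝ) - (j : ℝ)| * q s i * q s j)
      = fun s => ∑ m ∈ Icc (0:ℤ) (2*k), cdf (q s) m * (1 - cdf (q s) m) := by
    funext s
    rw [half_sum_abs_sub_mul_mul]
    exact sum_congr rfl fun m hm => by
      simp only [mem_Icc] at hm
      rw [sum_Icc_eq_one_sub_cdf (hsum s) (by omega) (by omega), add_sub_cancel_right, cdf]
  have hF : ∀ m ∈ Icc (0:ℤ) (2*k), HasDerivAt (fun s => cdf (q s) m) (flux (q t) m) t :=
    fun m hm => hasDerivAt_cdf hm (hsum t) (hout t _ (by omega)) (hode t)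
  have hVderiv := HasDerivAt.fun_sum fun m hm => (hF m hm).mul ((hF m hm).const_sub 1)
  refine ⟨?_, ?_⟩
  · rw [hV, sum_triple_eq_sum_cdf_mul (hsum t), ← sum_flux_mul_eq (hsum t) hN
      (hout t _ (by omega))]
    exact hVderiv.congr_deriv (sum_congr rfl fun m _ => by ring)
  · exact mul_nonpos_of_nonpos_of_nonneg (by norm_num) <| sum_nonneg fun l _ =>
      sum_nonneg fun j _ => sum_nonneg fun i _ =>
        mul_nonneg (mul_nonneg (hpos t i) (hpos t j)) (hpos t l)

theorem stmt6 (k : ℕ) (hk : 0 < k) (q : ℝ → ℤ → ℝ)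
    (hout : ∀ t n, (n < 0 ∨ (2*k : ℤ) < n) → q t n = 0)
    (hpos : ∀ t n, 0 ≤ q t n)
    (hsum : ∀ t, ∑ n ∈ Finset.Icc (0:ℤ) (2*k), q t n = 1)
    (hode : ∀ t, ∀ n ∈ Finset.Icc (0:ℤ) (2*k),
      HasDerivAt (fun s => q s n)
        (q t (n-1) * (∑ j ∈ Finset.Icc n (2*k : ℤ), q t j)
          + q t (n+1) * (∑ j ∈ Finset.Icc (0:ℤ) n, q t j)
          - q t n * (1 - q t n)) t) :
    ∀ t : ℝ,
      HasDerivAt (fun s => (1/2) * ∑ i ∈ Finset.Icc (0:ℤ) (2*k),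
          ∑ j ∈ Finset.Icc (0:ℤ) (2*k), |(i : ℝ) - (j : ℝ)| * q s i * q s j)
        (-2 * ∑ l ∈ Finset.Icc (0:ℤ) (2*k), ∑ j ∈ Finset.Icc (0:ℤ) (l-1),
          ∑ i ∈ Finset.Icc (0:ℤ) (j-1), q t i * q t j * q t l) t
      ∧ -2 * ∑ l ∈ Finset.Icc (0:ℤ) (2*k), ∑ j ∈ Finset.Icc (0:ℤ) (l-1),
          ∑ i ∈ Finset.Icc (0:ℤ) (j-1), q t i * q t j * q t l ≤ 0 :=
  stmt6_general k q hout hpos hsum hode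
end

section
/- For k = 1 and a probability vector (q_0, q_1, q_2) with mean μ = q_1 + 2q_2, one has q_1 ≤ min{μ, 2 - μ}, and consequently G̃[q] - G̃[q*] = ((min{μ, 2-μ})² - q_1²)/2 ≥ 0, where G̃[q] = q_0 q_1 + q_1 q_2 + 2 q_0 q_2 and G̃[q*] = (1 - μ + ⌊μ⌋)(μ - ⌊μ⌋). -/
/-!
Since `q₀ + q₁ + q₂ = 1`, we have `2 - μ = 2q₀ + q₁`, so `q₁` is at most both `μ` and `2 - μ`, and
`G̃[q] = (μ(2 - μ) - q₁²)/2`. For `μ ∈ [0, 2]` the floor term equals `(μ(2 - μ) - min{μ, 2 - μ}²)/2`,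
which is checked separately for `⌊μ⌋ = 0, 1, 2`.
-/

theorem one_sub_fract_mul_fract_eq {μ : ℝ} (hμ0 : 0 ≤ μ) (hμ2 : μ ≤ 2) :
    (1 - μ + ⌊μ⌋₊) * (μ - ⌊μ⌋₊) = (μ * (2 - μ) - min μ (2 - μ) ^ 2) / 2 := by
  rcases lt_or_ge μ 1 with hlt | hge
  · rw [Nat.floor_eq_zero.mpr hlt, min_eq_left (by linarith)]
    push_cast
    ring
  rw [min_eq_right (by linarith)]
  rcases hμ2.lt_or_eq with hlt | rfl
  · rw [(Nat.floor_eq_iff (n := 1) hμ0).mpr ⟨by norm_num [hge], by norm_num [hlt]⟩]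
    push_cast
    ring
  · norm_num

section ProbabilityVector

variable {q0 q1 q2 : ℝ}

theorem le_min_mean_two_sub_mean (h0 : 0 ≤ q0) (h2 : 0 ≤ q2) (hsum : q0 + q1 + q2 = 1) :
    q1 ≤ min (q1 + 2 * q2) (2 - (q1 + 2 * q2)) :=
  le_min (by linarith) (by linarith)

theorem weighted_pair_sum_eq (hsum : q0 + q1 + q2 = 1) :
    q0 * q1 + q1 * q2 + 2 * q0 * q2 = ((q1 + 2 * q2) * (2 - (q1 + 2 * q2)) - q1 ^ 2) / 2 := by
  obtain rfl : q0 = 1 - q1 - q2 := by linarith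
  ring

end ProbabilityVector

theorem stmt9_general (q0 q1 q2 : ℝ) (h0 : 0 ≤ q0) (h1 : 0 ≤ q1) (h2 : 0 ≤ q2)
    (hsum : q0 + q1 + q2 = 1) (μ : ℝ) (hμ : μ = q1 + 2*q2) :
    q1 ≤ min μ (2 - μ)
    ∧ (q0*q1 + q1*q2 + 2*q0*q2) - (1 - μ + (Nat.floor μ : ℝ)) * (μ - (Nat.floor μ : ℝ))
        = ((min μ (2 - μ))^2 - q1^2) / 2
    ∧ 0 ≤ ((min μ (2 - μ))^2 - q1^2) / 2 := by
  subst hμ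
  have hle := le_min_mean_two_sub_mean h0 h2 hsum
  refine ⟨hle, ?_, ?_⟩
  · rw [weighted_pair_sum_eq hsum, one_sub_fract_mul_fract_eq (by positivity) (by linarith)]
    ring
  · have := pow_le_pow_left₀ h1 hle 2
    linarith

theorem stmt9 (q0 q1 q2 : ℝ) (h0 : 0 ≤ q0) (h1 : 0 ≤ q1) (h2 : 0 ≤ q2)
    (hsum : q0 + q1 + q2 = 1) (μ : ℝ) (hμ : μ = q1 + 2*q2)
    (hμ0 : 0 < μ) (hμ2 : μ < 2) :
    q1 ≤ min μ (2 - μ)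
    ∧ (q0*q1 + q1*q2 + 2*q0*q2) - (1 - μ + (Nat.floor μ : ℝ)) * (μ - (Nat.floor μ : ℝ))
        = ((min μ (2 - μ))^2 - q1^2) / 2
    ∧ 0 ≤ ((min μ (2 - μ))^2 - q1^2) / 2 :=
  stmt9_general q0 q1 q2 h0 h1 h2 hsum μ hμ
end

section
/- Let q(t) be a classical solution in the probability simplex of the α=0 system (q_0' = (1-q_0-q_1)q_1, q_n' = q_{n-1}Σ_{j≤n-2}q_j + q_{n+1}Σ_{j≥n+2}q_j - q_n(1-q_n), q_{2k}' = (1-q_{2k-1}-q_{2k})q_{2k-1}). Then the mean μ(t) = Σ_{n=0}^{2k} n q_n(t) satisfies μ'(t) = (q_0(t) - q_{2k}(t))(1 - q_0(t) - q_{2k}(t)). -/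
/-!
Write `P m = q_0 + ⋯ + q_{m-1}` and `N = 2k`. After shifting indices in the gain terms
`n q_{n-1} P_{n-1}` and `n q_{n+1} (1 - P_{n+2})`, the interior part of `Σ n q_n'` becomes a sum over
all sites of `q_m (2 P_m + q_m - 1)`, which telescopes to `P_{N+1}² - P_{N+1} = 0`. What is left are
the corrections at the two ends of the chain, `q_0 (1 - q_0) - q_N (1 - q_N)`, which factor as the
claimed drift.
-/

open Finset

lemma sum_Icc_zero_eq_sum_range_toNat {M : Type*} [AddCommMonoid M] (f : ℤ → M) (b : ℤ) :
    ∑ i ∈ Icc 0 b, f i = ∑ i ∈ range (b + 1).toNat, f i := by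
  simp [Int.Icc_eq_finset_map]

lemma sum_Ioo_zero_eq_sum_range_toNat {M : Type*} [AddCommMonoid M] (f : ℤ → M) (b : ℤ) :
    ∑ i ∈ Ioo 0 b, f i = ∑ i ∈ range (b - 1).toNat, f (i + 1) := by
  simp [Int.Ioo_eq_finset_map, add_comm]

lemma sum_Icc_eq_sum_Icc_zero_sub {G : Type*} [AddCommGroup G] (f : ℤ → G) {a b : ℤ}
    (ha : 0 ≤ a) (hab : a ≤ b + 1) :
    ∑ i ∈ Icc a b, f i = ∑ i ∈ Icc 0 b, f i - ∑ i ∈ Icc 0 (a - 1), f i := by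
  rw [eq_sub_iff_add_eq, ← sum_union]
  · congr 1; ext i; simp only [mem_union, mem_Icc]; omega
  · rw [disjoint_left]; intro i; simp only [mem_Icc]; omega

lemma sum_range_moment_flux (s : ℕ → ℝ) (n : ℕ) :
    ∑ j ∈ range n, ((j : ℝ) + 1) * (s j * ∑ i ∈ range j, s i)
      + ∑ j ∈ range n, ((j : ℝ) - 1) * (s j * (1 - ∑ i ∈ range (j + 1), s i))
      - ∑ j ∈ range n, (j : ℝ) * (s j * (1 - s j))
      = (∑ i ∈ range n, s i) ^ 2 - ∑ i ∈ range n, s i := by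
  induction n with
  | zero => simp
  | succ n ih =>
    simp only [sum_range_succ _ n] at ih ⊢
    linear_combination ih

lemma first_moment_drift_nat (N : ℕ) (s : ℕ → ℝ) (hs : ∑ i ∈ range (N + 2), s i = 1) :
    ∑ m ∈ range N, ((m : ℝ) + 1) * (s m * ∑ j ∈ range m, s j
        + s (m + 2) * (1 - ∑ j ∈ range (m + 3), s j) - s (m + 1) * (1 - s (m + 1)))
      + ((N : ℝ) + 1) * ((1 - s N - s (N + 1)) * s N)
      = (s 0 - s (N + 1)) * (1 - s 0 - s (N + 1)) := by
  set P : ℕ → ℝ := fun m => ∑ j ∈ range m, s j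
  have hPsucc (m : ℕ) : P (m + 1) = P m + s m := sum_range_succ s m
  have hP1 : P 1 = s 0 := by simp [P]
  have hPN1 : P (N + 1) = 1 - s (N + 1) := by linarith [hPsucc (N + 1)]
  have hPN : P N = 1 - s N - s (N + 1) := by linarith [hPsucc N]
  have hsplit : ∑ m ∈ range N, ((m : ℝ) + 1) * (s m * P m + s (m + 2) * (1 - P (m + 3))
      - s (m + 1) * (1 - s (m + 1))) = ∑ m ∈ range N, ((m : ℝ) + 1) * (s m * P m)
        + ∑ m ∈ range N, ((m : ℝ) + 1) * (s (m + 2) * (1 - P (m + 3)))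
        - ∑ m ∈ range N, ((m : ℝ) + 1) * (s (m + 1) * (1 - s (m + 1))) := by
    rw [← sum_add_distrib, ← sum_sub_distrib]
    exact sum_congr rfl fun m _ => by ring
  have hleft : ∑ m ∈ range N, ((m : ℝ) + 1) * (s m * P m) =
      ∑ j ∈ range (N + 2), ((j : ℝ) + 1) * (s j * P j)
        - (N + 1) * (s N * P N) - (N + 2) * (s (N + 1) * P (N + 1)) := by
    rw [sum_range_succ _ (N + 1), sum_range_succ]; push_cast; ring
  have hright : ∑ m ∈ range N, ((m : ℝ) + 1) * (s (m + 2) * (1 - P (m + 3))) =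
      ∑ j ∈ range (N + 2), ((j : ℝ) - 1) * (s j * (1 - P (j + 1))) + s 0 * (1 - P 1) := by
    rw [sum_range_succ' _ (N + 1), sum_range_succ']; push_cast; ring_nf
  have hself : ∑ m ∈ range N, ((m : ℝ) + 1) * (s (m + 1) * (1 - s (m + 1))) =
      ∑ j ∈ range (N + 2), (j : ℝ) * (s j * (1 - s j))
        - (N + 1) * (s (N + 1) * (1 - s (N + 1))) := by
    rw [sum_range_succ, sum_range_succ']; push_cast; ring
  have hbulk := sum_range_moment_flux s (N + 2)
  rw [hs] at hbulk
  change ∑ m ∈ range N, ((m : ℝ) + 1) * (s m * P m + s (m + 2) * (1 - P (m + 3))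
      - s (m + 1) * (1 - s (m + 1))) + _ = _
  rw [← hPN, hsplit, hleft, hright, hself, hP1, hPN1]
  linear_combination hbulk

lemma first_moment_drift (N : ℤ) (hN : 0 < N) (p : ℤ → ℝ) (hp : ∑ n ∈ Icc 0 N, p n = 1) :
    ∑ n ∈ Ioo 0 N, (n : ℝ) * (p (n - 1) * ∑ j ∈ Icc 0 (n - 2), p j
        + p (n + 1) * ∑ j ∈ Icc (n + 2) N, p j - p n * (1 - p n))
      + N * ((1 - p (N - 1) - p N) * p (N - 1))
      = (p 0 - p N) * (1 - p 0 - p N) := by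
  obtain ⟨M, rfl⟩ : ∃ M : ℕ, N = M + 1 := ⟨(N - 1).toNat, by omega⟩
  have hs : ∑ i ∈ range (M + 2), p i = 1 := by
    rw [← hp, sum_Icc_zero_eq_sum_range_toNat]; congr 1
  have hprefix (i : ℕ) : ∑ j ∈ Icc 0 ((i : ℤ) + 1 - 2), p j = ∑ j ∈ range i, p j := by
    rw [sum_Icc_zero_eq_sum_range_toNat]; congr; omega
  have hsuffix (i : ℕ) (hi : i < M) :
      ∑ j ∈ Icc ((i : ℤ) + 1 + 2) (M + 1), p j = 1 - ∑ j ∈ range (i + 3), p j := by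
    rw [sum_Icc_eq_sum_Icc_zero_sub _ (by omega) (by omega), hp, sum_Icc_zero_eq_sum_range_toNat]
    congr; omega
  rw [sum_Ioo_zero_eq_sum_range_toNat, show ((M : ℤ) + 1 - 1).toNat = M by omega]
  convert first_moment_drift_nat M (fun i => p i) hs using 2
  · refine sum_congr rfl fun i hi => ?_
    rw [hprefix, hsuffix i (mem_range.1 hi)]
    push_cast; ring_nf
  all_goals push_cast; ring_nf

lemma hasDerivAt_first_moment (q : ℝ → ℤ → ℝ) (q' : ℤ → ℝ) {N : ℤ} (hN : 0 < N) {q'N t : ℝ}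
    (hint : ∀ n ∈ Ioo 0 N, HasDerivAt (fun s => q s n) (q' n) t)
    (htop : HasDerivAt (fun s => q s N) q'N t) :
    HasDerivAt (fun s => ∑ n ∈ Icc 0 N, (n : ℝ) * q s n)
      (∑ n ∈ Ioo 0 N, (n : ℝ) * q' n + N * q'N) t := by
  have hsplit (s : ℝ) : ∑ n ∈ Icc 0 N, (n : ℝ) * q s n
      = ∑ n ∈ Ioo 0 N, (n : ℝ) * q s n + N * q s N := by
    rw [← sum_subset Ioc_subset_Icc_self, ← Ioo_insert_right hN, sum_insert (by simp), add_comm]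
    intro n hn hn'
    rw [show n = 0 by simp only [mem_Icc, mem_Ioc] at hn hn'; omega]
    simp
  simp_rw [hsplit]
  exact (HasDerivAt.fun_sum fun n hn => (hint n hn).const_mul _).add (htop.const_mul _)

theorem stmt13_general (k : ℕ) (hk : 0 < k) (q : ℝ → ℤ → ℝ)
    (hsum : ∀ t, ∑ n ∈ Finset.Icc (0:ℤ) (2*k), q t n = 1)
    (hoden : ∀ t, ∀ n : ℤ, 0 < n → n < 2*k →
      HasDerivAt (fun s => q s n)
        (q t (n-1) * (∑ j ∈ Finset.Icc (0:ℤ) (n-2), q t j)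
          + q t (n+1) * (∑ j ∈ Finset.Icc (n+2) (2*k : ℤ), q t j)
          - q t n * (1 - q t n)) t)
    (hode2k : ∀ t, HasDerivAt (fun s => q s (2*k))
      ((1 - q t (2*k-1) - q t (2*k)) * q t (2*k-1)) t) :
    ∀ t : ℝ,
      HasDerivAt (fun s => ∑ n ∈ Finset.Icc (0:ℤ) (2*k), (n : ℝ) * q s n)
        ((q t 0 - q t (2*k)) * (1 - q t 0 - q t (2*k))) t := by
  intro t
  have hN : (0 : ℤ) < 2 * k := by omega
  have hμ := hasDerivAt_first_moment q _ hN
    (fun n hn => hoden t n (mem_Ioo.1 hn).1 (mem_Ioo.1 hn).2) (hode2k t)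
  rwa [first_moment_drift _ hN (q t) (hsum t)] at hμ

theorem stmt13 (k : ℕ) (hk : 0 < k) (q : ℝ → ℤ → ℝ)
    (hpos : ∀ t n, 0 ≤ q t n)
    (hsum : ∀ t, ∑ n ∈ Finset.Icc (0:ℤ) (2*k), q t n = 1)
    (hode0 : ∀ t, HasDerivAt (fun s => q s 0) ((1 - q t 0 - q t 1) * q t 1) t)
    (hoden : ∀ t, ∀ n : ℤ, 0 < n → n < 2*k →
      HasDerivAt (fun s => q s n)
        (q t (n-1) * (∑ j ∈ Finset.Icc (0:ℤ) (n-2), q t j)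
          + q t (n+1) * (∑ j ∈ Finset.Icc (n+2) (2*k : ℤ), q t j)
          - q t n * (1 - q t n)) t)
    (hode2k : ∀ t, HasDerivAt (fun s => q s (2*k))
      ((1 - q t (2*k-1) - q t (2*k)) * q t (2*k-1)) t) :
    ∀ t : ℝ,
      HasDerivAt (fun s => ∑ n ∈ Finset.Icc (0:ℤ) (2*k), (n : ℝ) * q s n)
        ((q t 0 - q t (2*k)) * (1 - q t 0 - q t (2*k))) t :=
  stmt13_general k hk q hsum hoden hode2k
end

section
/- For k = 1, the functions q_1(t) = C/(C + e^t) with C = q_1(0)/(1 - q_1(0)), together with q_2(t) = ((C + e^t)/e^t)·[(C/2)·((C+2)e^{2t} - 2e^t - C)/((1+C)²(e^t + C)²) + q_2(0)/(1+C)] and q_0 = 1 - q_1 - q_2, solve the system q_0' = (1 - q_0 - q_1)q_1, q_1' = -q_1(1 - q_1) [i.e., q_1' = q_0·0 + q_2·0 - q_1(1-q_1) with empty sums], q_2' = (1 - q_1 - q_2)q_1, and converge as t → ∞ to q̄_0 = (1 + q_0(0)² - q_2(0)²)/2, q̄_1 = 0, q̄_2 = (1 - q_0(0)² + q_2(0)²)/2.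 -/
/-!
`q₁` solves the logistic equation. The quantity `q₂ (1 - q₁) + q₁ - q₁² / 2` is a first integral
of the `q₂`-equation (its derivative is `(1 - q₁) (q₂' - (1 - q₁ - q₂) q₁)`), so solutions have the
form `q₂ = (K - q₁ + q₁² / 2) / (1 - q₁)`; the given closed form is this with
`K = C (C + 2) / (2 (1 + C)²) + q₂(0) / (1 + C)`. Since `q₁ → 0`, `q₂ → K`, and in terms of the
initial data `K = (1 - q₀(0)² + q₂(0)²) / 2`.
-/

open Real Filter Topology

lemma hasDerivAt_div_const_add_exp {C : ℝ} (t : ℝ) (h : C + exp t ≠ 0) :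
    HasDerivAt (fun s => C / (C + exp s)) (-(C / (C + exp t) * (1 - C / (C + exp t)))) t := by
  refine ((hasDerivAt_const t C).div ((hasDerivAt_exp t).const_add C) h).congr_deriv ?_
  field_simp
  ring

lemma tendsto_div_const_add_exp_atTop (C : ℝ) :
    Tendsto (fun t => C / (C + exp t)) atTop (𝓝 0) :=
  tendsto_const_nhds.div_atTop (tendsto_atTop_add_const_left _ C tendsto_exp_atTop)

section FirstIntegral

variable {p : ℝ → ℝ} (K : ℝ)

lemma HasDerivAt.firstIntegral_div_one_sub {t : ℝ} (hp : HasDerivAt p (-(p t * (1 - p t))) t)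
    (h1 : p t ≠ 1) :
    HasDerivAt (fun s => (K - p s + p s ^ 2 / 2) / (1 - p s))
      ((1 - p t - (K - p t + p t ^ 2 / 2) / (1 - p t)) * p t) t := by
  have h : 1 - p t ≠ 0 := sub_ne_zero.2 h1.symm
  refine ((((hasDerivAt_const t K).sub hp).add ((hp.pow 2).div_const 2)).div
    ((hasDerivAt_const t 1).sub hp) h).congr_deriv ?_
  simp only [Pi.sub_apply, Pi.add_apply, Pi.pow_apply]
  field_simp
  ring

lemma Filter.Tendsto.firstIntegral_div_one_sub {l : Filter ℝ} (hp : Tendsto p l (𝓝 0)) :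
    Tendsto (fun s => (K - p s + p s ^ 2 / 2) / (1 - p s)) l (𝓝 K) := by
  have := ((tendsto_const_nhds (x := K)).sub hp |>.add ((hp.pow 2).div_const 2)).div
    ((tendsto_const_nhds (x := (1 : ℝ))).sub hp) (by norm_num)
  rwa [sub_zero, sub_zero, zero_pow two_ne_zero, zero_div, add_zero, div_one] at this

end FirstIntegral

lemma closedForm_eq_firstIntegral_div_one_sub {C : ℝ} (c t : ℝ) (hC : 0 ≤ C) :
    ((C + exp t) / exp t) * ((C / 2) * ((C + 2) * exp (2 * t) - 2 * exp t - C) /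
        ((1 + C) ^ 2 * (exp t + C) ^ 2) + c / (1 + C)) =
      (C * (C + 2) / (2 * (1 + C) ^ 2) + c / (1 + C) - C / (C + exp t) + (C / (C + exp t)) ^ 2 / 2)
        / (1 - C / (C + exp t)) := by
  have hCE : 0 < C + exp t := by positivity
  have hEC : 0 < exp t + C := by positivity
  have h1C : 0 < 1 + C := by positivity
  have hq : 1 - C / (C + exp t) = exp t / (C + exp t) := by field_simp; ring
  rw [hq, show exp (2 * t) = exp t ^ 2 by rw [← exp_nat_mul]; norm_num]
  field_simp
  ring

lemma firstIntegral_const_eq {a b c C : ℝ} (hsum : a + b + c = 1) (hb1 : b < 1)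
    (hC : C = b / (1 - b)) :
    C * (C + 2) / (2 * (1 + C) ^ 2) + c / (1 + C) = (1 - a ^ 2 + c ^ 2) / 2 := by
  have hb' : 1 - b ≠ 0 := by linarith
  have h1C : 1 + C = 1 / (1 - b) := by rw [hC]; field_simp; ring
  obtain rfl : a = 1 - b - c := by linarith
  rw [h1C, hC]
  field_simp
  ring

theorem stmt14_general (a b c : ℝ) (hb : 0 ≤ b)
    (hsum : a + b + c = 1) (hb1 : b < 1)
    (C : ℝ) (hC : C = b / (1 - b))
    (q1 q2 q0 : ℝ → ℝ)
    (hq1 : ∀ t, q1 t = C / (C + Real.exp t))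
    (hq2 : ∀ t, q2 t = ((C + Real.exp t) / Real.exp t) *
      ((C/2) * ((C+2) * Real.exp (2*t) - 2 * Real.exp t - C) /
        ((1+C)^2 * (Real.exp t + C)^2) + c / (1+C)))
    (hq0 : ∀ t, q0 t = 1 - q1 t - q2 t) :
    q0 0 = a ∧ q1 0 = b ∧ q2 0 = c
    ∧ (∀ t, HasDerivAt q0 ((1 - q0 t - q1 t) * q1 t) t)
    ∧ (∀ t, HasDerivAt q1 (-(q1 t * (1 - q1 t))) t)
    ∧ (∀ t, HasDerivAt q2 ((1 - q1 t - q2 t) * q1 t) t)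
    ∧ Filter.Tendsto q0 Filter.atTop (nhds ((1 + a^2 - c^2)/2))
    ∧ Filter.Tendsto q1 Filter.atTop (nhds 0)
    ∧ Filter.Tendsto q2 Filter.atTop (nhds ((1 - a^2 + c^2)/2)) := by
  have hb' : 1 - b ≠ 0 := by linarith
  have hC0 : 0 ≤ C := hC ▸ div_nonneg hb (by linarith)
  have hCE : ∀ t, C + exp t ≠ 0 := fun t => by positivity
  set K := C * (C + 2) / (2 * (1 + C) ^ 2) + c / (1 + C)
  have hq1_eq : q1 = fun t => C / (C + exp t) := funext hq1
  have hq2_eq : q2 = fun t => (K - q1 t + q1 t ^ 2 / 2) / (1 - q1 t) :=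
    funext fun t => by rw [hq2, hq1, closedForm_eq_firstIntegral_div_one_sub c t hC0]
  have hq0_eq : q0 = fun t => 1 - q1 t - q2 t := funext hq0
  have hq1_ne : ∀ t, q1 t ≠ 1 := fun t => by
    rw [hq1, Ne, div_eq_one_iff_eq (hCE t)]
    exact (lt_add_of_pos_right C (exp_pos t)).ne
  have hq1_zero : q1 0 = b := by
    rw [hq1, exp_zero, hC]
    field_simp
    ring
  have hq2_zero : q2 0 = c := by
    rw [hq2, mul_zero, exp_zero]
    field_simp
    ring
  have dq1 : ∀ t, HasDerivAt q1 (-(q1 t * (1 - q1 t))) t := fun t => by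
    rw [hq1_eq]
    exact hasDerivAt_div_const_add_exp t (hCE t)
  have dq2 : ∀ t, HasDerivAt q2 ((1 - q1 t - q2 t) * q1 t) t := fun t => by
    rw [hq2_eq]
    exact (dq1 t).firstIntegral_div_one_sub K (hq1_ne t)
  have lim1 : Tendsto q1 atTop (𝓝 0) := hq1_eq ▸ tendsto_div_const_add_exp_atTop C
  have lim2 : Tendsto q2 atTop (𝓝 K) := hq2_eq ▸ lim1.firstIntegral_div_one_sub K
  rw [show K = _ from firstIntegral_const_eq hsum hb1 hC] at lim2
  refine ⟨by rw [hq0, hq1_zero, hq2_zero]; linarith, hq1_zero, hq2_zero,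
    fun t => ?_, dq1, dq2, ?_, lim1, lim2⟩
  · rw [hq0_eq]
    refine (((hasDerivAt_const t 1).sub (dq1 t)).sub (dq2 t)).congr_deriv ?_
    ring
  · rw [hq0_eq]
    convert (tendsto_const_nhds.sub lim1).sub lim2 using 2
    ring

theorem stmt14 (a b c : ℝ) (ha : 0 ≤ a) (hb : 0 ≤ b) (hc : 0 ≤ c)
    (hsum : a + b + c = 1) (hb1 : b < 1)
    (C : ℝ) (hC : C = b / (1 - b))
    (q1 q2 q0 : ℝ → ℝ)
    (hq1 : ∀ t, q1 t = C / (C + Real.exp t))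
    (hq2 : ∀ t, q2 t = ((C + Real.exp t) / Real.exp t) *
      ((C/2) * ((C+2) * Real.exp (2*t) - 2 * Real.exp t - C) /
        ((1+C)^2 * (Real.exp t + C)^2) + c / (1+C)))
    (hq0 : ∀ t, q0 t = 1 - q1 t - q2 t) :
    q0 0 = a ∧ q1 0 = b ∧ q2 0 = c
    ∧ (∀ t, HasDerivAt q0 ((1 - q0 t - q1 t) * q1 t) t)
    ∧ (∀ t, HasDerivAt q1 (-(q1 t * (1 - q1 t))) t)
    ∧ (∀ t, HasDerivAt q2 ((1 - q1 t - q2 t) * q1 t) t)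
    ∧ Filter.Tendsto q0 Filter.atTop (nhds ((1 + a^2 - c^2)/2))
    ∧ Filter.Tendsto q1 Filter.atTop (nhds 0)
    ∧ Filter.Tendsto q2 Filter.atTop (nhds ((1 - a^2 + c^2)/2)) :=
  stmt14_general a b c hb hsum hb1 C hC q1 q2 q0 hq1 hq2 hq0
end

section
/- Let q(t) be a classical solution with strictly positive entries in the probability simplex of the α = 1/2 system q_0' = (1/2)(1-q_1)q_1 - (1/2)(1-q_0)q_0, q_n' = (1/2)q_{n-1}(1-q_{n-1}) + (1/2)q_{n+1}(1-q_{n+1}) - q_n(1-q_n) for 0 < n < 2k, q_{2k}' = (1/2)(1-q_{2k-1})q_{2k-1} - (1/2)(1-q_{2k})q_{2k}, and let D_KL(q || û) = Σ_{n=0}^{2k} q_n log((2k+1) q_n). Then d/dt D_KL(q || û) = -(1/2) Σ_{n=0}^{2k-1} (1 - q_n - q_{n+1})(q_{n+1} - q_n)(log q_{n+1} - log q_n), which is ≤ 0 since 1 - q_n - q_{n+1} ≥ 0 and (q_{n+1}-q_n)(log q_{n+1} - log q_n) ≥ 0. -/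
lemma abel_sum (N : ℕ) (G x : ℕ → ℝ) (hG : G N = 0) :
    ∑ n ∈ Finset.range (N+1), (G n - (if n = 0 then 0 else G (n-1))) * x n
    = ∑ n ∈ Finset.range N, G n * (x n - x (n+1)) := by
  have h1 : ∑ n ∈ Finset.range (N+1), (G n - (if n = 0 then 0 else G (n-1))) * x n
      = ∑ n ∈ Finset.range (N+1), G n * x n
        - ∑ n ∈ Finset.range (N+1), (if n = 0 then 0 else G (n-1)) * x n := by
    rw [← Finset.sum_sub_distrib]; apply Finset.sum_congr rfl; intro n _; ring
  rw [h1, Finset.sum_range_succ, hG, Finset.sum_range_succ']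
  simp only [Nat.add_sub_cancel, if_neg (Nat.succ_ne_zero _), if_true, zero_mul, add_zero]
  rw [← Finset.sum_sub_distrib]
  apply Finset.sum_congr rfl; intro n _; ring

theorem stmt15 (k : ℕ) (hk : 0 < k) (q : ℝ → ℕ → ℝ)
    (hpos : ∀ t n, n ≤ 2*k → 0 < q t n)
    (hsum : ∀ t, ∑ n ∈ Finset.range (2*k+1), q t n = 1)
    (hode0 : ∀ t, HasDerivAt (fun s => q s 0)
      ((1/2) * (1 - q t 1) * q t 1 - (1/2) * (1 - q t 0) * q t 0) t)
    (hoden : ∀ t, ∀ n : ℕ, 0 < n → n < 2*k →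
      HasDerivAt (fun s => q s n)
        ((1/2) * q t (n-1) * (1 - q t (n-1)) + (1/2) * q t (n+1) * (1 - q t (n+1))
          - q t n * (1 - q t n)) t)
    (hode2k : ∀ t, HasDerivAt (fun s => q s (2*k))
      ((1/2) * (1 - q t (2*k-1)) * q t (2*k-1) - (1/2) * (1 - q t (2*k)) * q t (2*k)) t) :
    ∀ t : ℝ,
      HasDerivAt (fun s => ∑ n ∈ Finset.range (2*k+1),
          q s n * Real.log (q s n / (1 / (2*(k:ℝ)+1))))
        (-(1/2) * ∑ n ∈ Finset.range (2*k), (1 - q t n - q t (n+1))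
          * (q t (n+1) - q t n) * (Real.log (q t (n+1)) - Real.log (q t n))) t
      ∧ -(1/2) * ∑ n ∈ Finset.range (2*k), (1 - q t n - q t (n+1))
          * (q t (n+1) - q t n) * (Real.log (q t (n+1)) - Real.log (q t n)) ≤ 0 := by
  intro t
  set c : ℝ := 1 / (2*(k:ℝ)+1) with hc_def
  have hc : 0 < c := by positivity
  set a : ℕ → ℝ := fun n => q t n with ha_def
  set G : ℕ → ℝ := fun n => if n < 2*k then
      (1/2) * (a (n+1) * (1 - a (n+1)) - a n * (1 - a n)) else 0 with hG_def
  set D : ℕ → ℝ := fun n => G n - (if n = 0 then 0 else G (n-1)) with hD_def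
  have h2k : 0 < 2*k := by omega
  -- derivative of each q · n is D n
  have hqd : ∀ n, n < 2*k+1 → HasDerivAt (fun s => q s n) (D n) t := by
    intro n hn
    rcases Nat.eq_zero_or_pos n with rfl | hn0
    · have := hode0 t
      convert this using 1
      simp only [hD_def, hG_def, eq_self_iff_true, if_true, if_pos h2k, ha_def]
      ring
    · rcases eq_or_lt_of_le (Nat.lt_succ_iff.mp hn) with rfl | hlt
      · have := hode2k t
        convert this using 1
        have h1 : ¬ (2*k < 2*k) := lt_irrefl _
        have h2 : 2*k - 1 < 2*k := by omega
        have h3 : 2*k ≠ 0 := by omega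
        simp only [hD_def, hG_def, if_neg h1, if_neg h3, if_pos h2, ha_def]
        have h4 : 2*k - 1 + 1 = 2*k := by omega
        rw [h4]; ring
      · have := hoden t n hn0 hlt
        convert this using 1
        have h2 : n - 1 < 2*k := by omega
        have h3 : n ≠ 0 := by omega
        simp only [hD_def, hG_def, if_pos hlt, if_neg h3, if_pos h2, ha_def]
        have h4 : n - 1 + 1 = n := by omega
        rw [h4]; ring
  have hG2k : G (2*k) = 0 := by simp [hG_def]
  -- nonnegativity of each summand
  have hterm : ∀ n, n < 2*k → 0 ≤ (1 - a n - a (n+1)) * (a (n+1) - a n)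
      * (Real.log (a (n+1)) - Real.log (a n)) := by
    intro n hn
    have hpn : 0 < a n := hpos t n (by omega)
    have hpn1 : 0 < a (n+1) := hpos t (n+1) (by omega)
    have hfac1 : 0 ≤ 1 - a n - a (n+1) := by
      have hsub : ({n, n+1} : Finset ℕ) ⊆ Finset.range (2*k+1) := by
        intro m hm
        simp only [Finset.mem_insert, Finset.mem_singleton] at hm
        rcases hm with rfl | rfl <;> simp [Finset.mem_range] <;> omega
      have hle : ∑ m ∈ ({n, n+1} : Finset ℕ), q t m ≤ ∑ m ∈ Finset.range (2*k+1), q t m := by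
        apply Finset.sum_le_sum_of_subset_of_nonneg hsub
        intro m hm _
        exact le_of_lt (hpos t m (by simp [Finset.mem_range] at hm; omega))
      rw [Finset.sum_pair (by omega : n ≠ n+1), hsum t] at hle
      simp only [ha_def]; linarith
    have hfac2 : 0 ≤ (a (n+1) - a n) * (Real.log (a (n+1)) - Real.log (a n)) := by
      rcases le_total (a n) (a (n+1)) with h | h
      · exact mul_nonneg (by linarith) (by
          have := Real.log_le_log hpn h
          linarith)
      · have hl := Real.log_le_log hpn1 h
        nlinarith
    rw [mul_assoc]
    exact mul_nonneg hfac1 hfac2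
  refine ⟨?_, ?_⟩
  · -- derivative
    have hEach : ∀ n ∈ Finset.range (2*k+1),
        HasDerivAt (fun s => q s n * Real.log (q s n / c))
          (D n * Real.log (a n / c) + a n * ((D n / c) / (a n / c))) t := by
      intro n hn
      rw [Finset.mem_range] at hn
      have hq := hqd n hn
      have hqpos : 0 < q t n := hpos t n (by omega)
      have h1 : HasDerivAt (fun s => q s n / c) (D n / c) t := hq.div_const c
      have h2 : HasDerivAt (fun s => Real.log (q s n / c)) ((D n / c) / (q t n / c)) t :=
        h1.log (by positivity)
      exact hq.mul h2
    have hsumderiv := HasDerivAt.fun_sum hEach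
    refine hsumderiv.congr_deriv ?_; symm
    -- algebraic identity
    have hstep : ∀ n ∈ Finset.range (2*k+1),
        D n * Real.log (a n / c) + a n * ((D n / c) / (a n / c))
          = D n * (Real.log (a n) - Real.log c + 1) := by
      intro n hn
      rw [Finset.mem_range] at hn
      have hqpos : 0 < a n := hpos t n (by omega)
      rw [Real.log_div (ne_of_gt hqpos) (ne_of_gt hc)]
      field_simp
    rw [Finset.sum_congr rfl hstep, abel_sum (2*k) G (fun n => Real.log (a n) - Real.log c + 1) hG2k]
    rw [Finset.mul_sum]
    refine Finset.sum_congr rfl ?_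
    intro n hn
    rw [Finset.mem_range] at hn
    simp only [hG_def, if_pos hn]
    ring
  · -- nonnegativity
    have hS : 0 ≤ ∑ n ∈ Finset.range (2*k), (1 - q t n - q t (n+1))
        * (q t (n+1) - q t n) * (Real.log (q t (n+1)) - Real.log (q t n)) := by
      apply Finset.sum_nonneg
      intro n hn
      rw [Finset.mem_range] at hn
      exact hterm n hn
    linarith
end
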